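/- arXiv:2605.17022 — 2 statements merged into one kernel-verified Lean document; each statement's English description precedes it below -/
import Mathlib

section
/- Let q, r, m, a, b be positive integers with r | q-1, r > 2, m ≥ 2, 0 ≤ a ≤ m-2, 2 ≤ b ≤ q-2, and b ≡ r-1 (mod r). Then the integer Δ = ((q-1)(q-b+1)q^{m-a-2})/r − (((q-b)q^{m-a-1} − 2)/r + 1) equals ((b-1)q^{m-a-2} + 2 − r)/r, and Δ ≥ 0, with Δ = 0 if and only if (b-1)q^{m-a-2} = r - 2. -/
/-- The gap Δ between the exact distance and the BCH-type lower bound. -/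
theorem stmt10 (q r m a b : ℕ) (hq : 0 < q) (hr0 : 0 < r) (hr : r ∣ q - 1) (hr2 : 2 < r) (hm : 2 ≤ m)
    (ha : a + 2 ≤ m) (hb1 : 2 ≤ b) (hb2 : b ≤ q - 2)
    (hbr : b % r = (r - 1) % r) :
    let Δ : ℤ :=
      ((q : ℤ) - 1) * ((q : ℤ) - b + 1) * (q : ℤ) ^ (m - a - 2) / r
        - ((((q : ℤ) - b) * (q : ℤ) ^ (m - a - 1) - 2) / r + 1)
    Δ = (((b : ℤ) - 1) * (q : ℤ) ^ (m - a - 2) + 2 - r) / r ∧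
    0 ≤ Δ ∧
    (Δ = 0 ↔ ((b : ℤ) - 1) * (q : ℤ) ^ (m - a - 2) = (r : ℤ) - 2) := by
  intro Δ
  have hk : m - a - 1 = (m - a - 2) + 1 := by omega
  set k := m - a - 2 with hkdef
  have hr' : (r : ℤ) ≠ 0 := by exact_mod_cast hr0.ne'
  have hrz : (2 : ℤ) < r := by exact_mod_cast hr2
  -- divisibilities
  have hq1 : (r : ℤ) ∣ (q : ℤ) - 1 := by
    have := Int.natCast_dvd_natCast.mpr hr
    rwa [Nat.cast_sub hq, Nat.cast_one] at this
  have hbnat : r ∣ b + 1 := by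
    have hmod : b % r = r - 1 := hbr.trans (Nat.mod_eq_of_lt (by omega))
    refine ⟨b / r + 1, ?_⟩
    have hdm := Nat.div_add_mod b r
    rw [Nat.mul_add, Nat.mul_one]
    omega
  have hb1' : (r : ℤ) ∣ (b : ℤ) + 1 := by exact_mod_cast hbnat
  have hqm : (q : ℤ) ≡ 1 [ZMOD (r : ℤ)] :=
    (Int.modEq_iff_dvd.mpr (by simpa using hq1)).symm
  have hbm : (b : ℤ) ≡ -1 [ZMOD (r : ℤ)] :=
    (Int.modEq_iff_dvd.mpr (by simpa using hb1')).symm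
  -- B divisible by r
  have hB : (r : ℤ) ∣ ((q : ℤ) - b) * (q : ℤ) ^ (k + 1) - 2 := by
    have h1 : ((q : ℤ) - b) * (q : ℤ) ^ (k + 1) - 2 ≡ (1 - (-1)) * 1 ^ (k + 1) - 2 [ZMOD (r : ℤ)] :=
      ((hqm.sub hbm).mul (hqm.pow _)).sub (Int.ModEq.refl 2)
    have h2 : ((q : ℤ) - b) * (q : ℤ) ^ (k + 1) - 2 ≡ 0 [ZMOD (r : ℤ)] := by
      simpa using h1
    exact Int.modEq_zero_iff_dvd.mp h2
  -- X = (b-1) q^k + 2 - r divisible by r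
  have hX : (r : ℤ) ∣ ((b : ℤ) - 1) * (q : ℤ) ^ k + 2 - r := by
    have h1 : ((b : ℤ) - 1) * (q : ℤ) ^ k + 2 ≡ (-1 - 1) * 1 ^ k + 2 [ZMOD (r : ℤ)] :=
      ((hbm.sub (Int.ModEq.refl 1)).mul (hqm.pow _)).add (Int.ModEq.refl 2)
    have h2 : (r : ℤ) ∣ ((b : ℤ) - 1) * (q : ℤ) ^ k + 2 := by
      simpa using (Int.modEq_zero_iff_dvd.mp (by simpa using h1))
    exact dvd_sub h2 dvd_rfl
  obtain ⟨y, hy⟩ := hB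
  obtain ⟨z, hz⟩ := hX
  -- A = r * (y + z + 1)
  have hA : ((q : ℤ) - 1) * ((q : ℤ) - b + 1) * (q : ℤ) ^ k = (r : ℤ) * (y + z + 1) := by
    have := hy
    have := hz
    ring_nf
    ring_nf at hy hz
    linear_combination hy + hz
  have hΔ : Δ = z := by
    show ((q : ℤ) - 1) * ((q : ℤ) - b + 1) * (q : ℤ) ^ k / r
        - ((((q : ℤ) - b) * (q : ℤ) ^ (m - a - 1) - 2) / r + 1) = z
    rw [hk, hy, hA, Int.mul_ediv_cancel_left _ hr', Int.mul_ediv_cancel_left _ hr']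
    ring
  -- positivity of t = (b-1) q^k
  have ht : (1 : ℤ) ≤ ((b : ℤ) - 1) * (q : ℤ) ^ k := by
    have hb2' : (2 : ℤ) ≤ b := by exact_mod_cast hb1
    have hq' : (1 : ℤ) ≤ (q : ℤ) ^ k := one_le_pow₀ (by exact_mod_cast hq)
    nlinarith
  have hzpos : 0 ≤ z := by
    rcases le_or_gt 0 z with h | h
    · exact h
    · exfalso
      have hz1 : z + 1 ≤ 0 := by omega
      nlinarith
  refine ⟨?_, ?_, ?_⟩
  · rw [hΔ, hz, Int.mul_ediv_cancel_left _ hr']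
  · rw [hΔ]; exact hzpos
  · rw [hΔ]
    constructor
    · intro h; rw [h] at hz; linarith
    · intro h
      have : (r : ℤ) * z = 0 := by linarith
      rcases mul_eq_zero.mp this with h' | h'
      · exact absurd h' hr'
      · exact h'
end

section
/- Let q ≥ 2 and let u = (u_1,...,u_m) with 0 ≤ u_i ≤ q-1 for all i and u_1 + ··· + u_m ≤ (q-1)a + b where 0 ≤ a ≤ m-1 and 0 ≤ b ≤ q-2. Then ∏_{i=1}^m (q - u_i) ≥ (q-b) q^{m-a-1}. -/
lemma key2' (X Y : ℕ) (hX : 1 ≤ X) (hY : 1 ≤ Y) : X + Y - 1 ≤ X * Y := by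
  obtain ⟨X, rfl⟩ := Nat.exists_eq_add_of_le hX
  obtain ⟨Y, rfl⟩ := Nat.exists_eq_add_of_le hY
  have h : 1 + X + (1 + Y) - 1 = 1 + X + Y := by omega
  rw [h]
  nlinarith

lemma key1' (q x y : ℕ) (hx : x ≤ q) (hy : y ≤ q) :
    q * (q - (x + y)) ≤ (q - x) * (q - y) := by
  rcases le_or_gt (x + y) q with h | h
  · zify [hx, hy, h]
    nlinarith
  · rw [Nat.sub_eq_zero_of_le h.le, Nat.mul_zero]
    exact Nat.zero_le _

lemma core (q : ℕ) (hq : 2 ≤ q) :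
    ∀ m (u : Fin m → ℕ), (∀ i, u i ≤ q - 1) → (∑ i, u i) < m * (q - 1) →
    (q - (∑ i, u i) % (q - 1)) * q ^ (m - (∑ i, u i) / (q - 1) - 1) ≤ ∏ i, (q - u i) := by
  intro m
  induction m with
  | zero => intro u _ h; simp at h
  | succ m ih =>
    intro u hu hS
    have hp1 : 1 ≤ q - 1 := by omega
    set p := q - 1 with hp
    rw [Fin.sum_univ_castSucc] at hS ⊢
    rw [Fin.prod_univ_castSucc]
    set x := u (Fin.last m) with hx
    set S' := ∑ i : Fin m, u i.castSucc with hS'def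
    have hxp : x ≤ p := hu _
    have hrest1 : (1 : ℕ) ≤ ∏ i : Fin m, (q - u i.castSucc) := by
      apply Finset.one_le_prod'
      intro i _
      have := hu i.castSucc
      omega
    rcases lt_or_ge S' (m * p) with h1 | h2
    · have hrest := ih (fun i => u i.castSucc) (fun i => hu _) h1
      set a' := S' / p with ha'
      set b' := S' % p with hb'
      have hb'p : b' < p := Nat.mod_lt _ (by omega)
      have hSeq : p * a' + b' = S' := Nat.div_add_mod S' p
      have ha'm : a' < m := by
        rw [ha']
        exact Nat.div_lt_iff_lt_mul (by omega) |>.mpr (by omega)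
      rcases lt_or_ge (b' + x) p with hc | hc
      · -- same quotient
        have hmod : (S' + x) % p = b' + x := by
          rw [← hSeq, Nat.add_assoc, Nat.mul_add_mod, Nat.mod_eq_of_lt hc]
        have hdiv : (S' + x) / p = a' := by
          rw [← hSeq, Nat.add_assoc, Nat.mul_add_div (by omega), Nat.div_eq_of_lt hc,
            Nat.add_zero]
        rw [hmod, hdiv]
        have hexp : m + 1 - a' - 1 = (m - a' - 1) + 1 := by omega
        rw [hexp, pow_succ]
        calc (q - (b' + x)) * (q ^ (m - a' - 1) * q)
            = (q * (q - (b' + x))) * q ^ (m - a' - 1) := by ring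
          _ ≤ ((q - b') * (q - x)) * q ^ (m - a' - 1) := by
              apply Nat.mul_le_mul_right
              exact key1' q b' x (by omega) (by omega)
          _ = ((q - b') * q ^ (m - a' - 1)) * (q - x) := by ring
          _ ≤ (∏ i : Fin m, (q - u i.castSucc)) * (q - x) := by
              exact Nat.mul_le_mul_right _ hrest
      · -- quotient increases by one
        have hb'' : b' + x - p < p := by omega
        have hrw : S' + x = p * (a' + 1) + (b' + x - p) := by
          have : p * (a' + 1) = p * a' + p := by ring
          omega
        have hmod : (S' + x) % p = b' + x - p := by
          rw [hrw, Nat.mul_add_mod, Nat.mod_eq_of_lt hb'']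
        have hdiv : (S' + x) / p = a' + 1 := by
          rw [hrw, Nat.mul_add_div (by omega), Nat.div_eq_of_lt hb'', Nat.add_zero]
        rw [hmod, hdiv]
        have hexp : m + 1 - (a' + 1) - 1 = m - a' - 1 := by omega
        rw [hexp]
        have hkey : q - (b' + x - p) ≤ (q - b') * (q - x) := by
          have h1' : (1 : ℕ) ≤ q - b' := by omega
          have h2' : (1 : ℕ) ≤ q - x := by omega
          have h3' : q - (b' + x - p) = (q - b') + (q - x) - 1 := by omega
          rw [h3']
          exact key2' _ _ h1' h2'
        calc (q - (b' + x - p)) * q ^ (m - a' - 1)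
            ≤ ((q - b') * (q - x)) * q ^ (m - a' - 1) := Nat.mul_le_mul_right _ hkey
          _ = ((q - b') * q ^ (m - a' - 1)) * (q - x) := by ring
          _ ≤ (∏ i : Fin m, (q - u i.castSucc)) * (q - x) := Nat.mul_le_mul_right _ hrest
    · -- all remaining coordinates are maximal
      have hub : S' ≤ m * p := by
        rw [hS'def]
        calc ∑ i : Fin m, u i.castSucc ≤ ∑ _i : Fin m, p :=
              Finset.sum_le_sum (fun i _ => hu _)
          _ = m * p := by simp [Finset.sum_const, mul_comm]
      have hS'eq : S' = m * p := le_antisymm hub h2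
      have hxlt : x < p := by
        have : (m + 1) * p = m * p + p := by ring
        omega
      have hmod : (S' + x) % p = x := by
        rw [hS'eq, mul_comm, Nat.mul_add_mod, Nat.mod_eq_of_lt hxlt]
      have hdiv : (S' + x) / p = m := by
        rw [hS'eq, mul_comm, Nat.mul_add_div (by omega), Nat.div_eq_of_lt hxlt,
          Nat.add_zero]
      rw [hmod, hdiv]
      have hexp : m + 1 - m - 1 = 0 := by omega
      rw [hexp, pow_zero, Nat.mul_one]
      calc q - x = 1 * (q - x) := (Nat.one_mul _).symm
        _ ≤ (∏ i : Fin m, (q - u i.castSucc)) * (q - x) := Nat.mul_le_mul_right _ hrest1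

/-- Footprint-bound minimization. -/
theorem stmt15 (q m a b : ℕ) (hq : 2 ≤ q) (ha : a + 1 ≤ m) (hb : b ≤ q - 2)
    (u : Fin m → ℕ) (hu : ∀ i, u i ≤ q - 1)
    (hsum : ∑ i, u i ≤ (q - 1) * a + b) :
    (q - b) * q ^ (m - a - 1) ≤ ∏ i, (q - u i) := by
  set S := ∑ i, u i with hS
  have hp1 : 1 ≤ q - 1 := by omega
  have hSlt : S < m * (q - 1) := by
    have : S ≤ (q - 1) * a + b := hsum
    have hle : (q - 1) * a + b ≤ (q - 1) * (m - 1) + (q - 2) := by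
      have : (q - 1) * a ≤ (q - 1) * (m - 1) := Nat.mul_le_mul_left _ (by omega)
      omega
    have : (q - 1) * (m - 1) + (q - 2) < m * (q - 1) := by
      have hm1 : m - 1 + 1 = m := by omega
      calc (q - 1) * (m - 1) + (q - 2) < (q - 1) * (m - 1) + (q - 1) := by omega
        _ = (q - 1) * (m - 1 + 1) := by ring
        _ = m * (q - 1) := by rw [hm1, mul_comm]
    omega
  have hcore := core q hq m u hu hSlt
  rw [← hS] at hcore
  set a' := S / (q - 1) with ha'
  set b' := S % (q - 1) with hb'
  have hb'lt : b' < q - 1 := Nat.mod_lt _ (by omega)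
  have hSeq : (q - 1) * a' + b' = S := Nat.div_add_mod S (q - 1)
  have ha'le : a' ≤ a := by
    rw [ha']
    have : S < (q - 1) * (a + 1) := by
      have : (q - 1) * (a + 1) = (q - 1) * a + (q - 1) := by ring
      omega
    exact Nat.lt_succ_iff.mp (Nat.div_lt_iff_lt_mul (by omega) |>.mpr
      (by rw [mul_comm]; exact this))
  refine le_trans ?_ hcore
  rcases eq_or_lt_of_le ha'le with heq | hlt
  · -- same a : then b' ≤ b
    subst heq
    have hb'b : b' ≤ b := by omega
    exact Nat.mul_le_mul_right _ (by omega)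
  · -- a' < a
    calc (q - b) * q ^ (m - a - 1) ≤ q * q ^ (m - a - 1) :=
          Nat.mul_le_mul_right _ (Nat.sub_le _ _)
      _ = q ^ (m - a - 1 + 1) := by rw [pow_succ]; ring
      _ ≤ q ^ (m - a' - 1) := Nat.pow_le_pow_right (by omega) (by omega)
      _ = 1 * q ^ (m - a' - 1) := (Nat.one_mul _).symm
      _ ≤ (q - b') * q ^ (m - a' - 1) := Nat.mul_le_mul_right _ (by omega)
end
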